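/- Let K be a compact Hausdorff space and Γ a unitary Banach module over C(K), and equip the dual space Γ' with the dual module structure (f•ψ)(s) = ψ(f•s) for f ∈ C(K), ψ ∈ Γ', s ∈ Γ. Then: (i) Γ satisfies the AM-identity if and only if Γ' satisfies the AL-identity; (ii) Γ satisfies the AL-identity if and only if Γ' satisfies the AM-identity. -/

import Mathlib

set_option linter.unusedSectionVars false


noncomputable section

variable {𝕜 : Type*} [RCLike 𝕜] {K : Type*} [TopologicalSpace K] [CompactSpace K]

/-- A unitary Banach module structure over `C(K, 𝕜)` on a `𝕜`-Banach space `Γ`. -/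
structure CKModule (𝕜 : Type*) [RCLike 𝕜] (K : Type*) [TopologicalSpace K] [CompactSpace K]
    (Γ : Type*) [NormedAddCommGroup Γ] [NormedSpace 𝕜 Γ] where
  smul : C(K, 𝕜) →L[𝕜] Γ →L[𝕜] Γ
  one_smul : ∀ s : Γ, smul 1 s = s
  mul_smul : ∀ (f g : C(K, 𝕜)) (s : Γ), smul (f * g) s = smul f (smul g s)
  norm_smul_le : ∀ (f : C(K, 𝕜)) (s : Γ), ‖smul f s‖ ≤ ‖f‖ * ‖s‖

variable {Γ : Type*} [NormedAddCommGroup Γ] [NormedSpace 𝕜 Γ]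

/-- The inclusion `C(K, ℝ) ⊆ C(K, 𝕜)`. -/
def ofRealC (𝕜 : Type*) [RCLike 𝕜] {K : Type*} [TopologicalSpace K] (f : C(K, ℝ)) :
    C(K, 𝕜) :=
  ⟨fun x => (f x : 𝕜), RCLike.continuous_ofReal.comp f.continuous⟩

/-- The AM-identity for a Banach module over `C(K, 𝕜)`. -/
def CKModule.IsAM (M : CKModule 𝕜 K Γ) : Prop :=
  ∀ (f₁ f₂ : C(K, ℝ)), (∀ x, 0 ≤ f₁ x) → (∀ x, 0 ≤ f₂ x) → ∀ s : Γ,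
    ‖M.smul (ofRealC 𝕜 (f₁ ⊔ f₂)) s‖ =
      max ‖M.smul (ofRealC 𝕜 f₁) s‖ ‖M.smul (ofRealC 𝕜 f₂) s‖

/-- The AL-identity for a Banach module over `C(K, 𝕜)`. -/
def CKModule.IsAL (M : CKModule 𝕜 K Γ) : Prop :=
  ∀ (f₁ f₂ : C(K, ℝ)), (∀ x, 0 ≤ f₁ x) → (∀ x, 0 ≤ f₂ x) → ∀ s : Γ,
    ‖M.smul (ofRealC 𝕜 f₁) s + M.smul (ofRealC 𝕜 f₂) s‖ =
      ‖M.smul (ofRealC 𝕜 f₁) s‖ + ‖M.smul (ofRealC 𝕜 f₂) s‖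

/-- The dual module operation on `Γ' = Γ →L[𝕜] 𝕜`: `(f • ψ)(s) = ψ(f • s)`. -/
def CKModule.dualSmul (M : CKModule 𝕜 K Γ) (f : C(K, 𝕜)) (ψ : Γ →L[𝕜] 𝕜) : Γ →L[𝕜] 𝕜 :=
  ψ.comp (M.smul f)

/-- The AM-identity for the dual module `Γ'`. -/
def CKModule.DualIsAM (M : CKModule 𝕜 K Γ) : Prop :=
  ∀ (f₁ f₂ : C(K, ℝ)), (∀ x, 0 ≤ f₁ x) → (∀ x, 0 ≤ f₂ x) → ∀ ψ : Γ →L[𝕜] 𝕜,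
    ‖M.dualSmul (ofRealC 𝕜 (f₁ ⊔ f₂)) ψ‖ =
      max ‖M.dualSmul (ofRealC 𝕜 f₁) ψ‖ ‖M.dualSmul (ofRealC 𝕜 f₂) ψ‖

/-- The AL-identity for the dual module `Γ'`. -/
def CKModule.DualIsAL (M : CKModule 𝕜 K Γ) : Prop :=
  ∀ (f₁ f₂ : C(K, ℝ)), (∀ x, 0 ≤ f₁ x) → (∀ x, 0 ≤ f₂ x) → ∀ ψ : Γ →L[𝕜] 𝕜,
    ‖M.dualSmul (ofRealC 𝕜 f₁) ψ + M.dualSmul (ofRealC 𝕜 f₂) ψ‖ =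
      ‖M.dualSmul (ofRealC 𝕜 f₁) ψ‖ + ‖M.dualSmul (ofRealC 𝕜 f₂) ψ‖

/-! ### Auxiliary lemmas -/

section Aux

lemma ofRealC_apply (f : C(K, ℝ)) (x : K) : ofRealC 𝕜 f x = (f x : 𝕜) := rfl

lemma ofRealC_add (f g : C(K, ℝ)) : ofRealC 𝕜 (f + g) = ofRealC 𝕜 f + ofRealC 𝕜 g := by
  ext x
  simp [ofRealC_apply]

lemma ofRealC_mul (f g : C(K, ℝ)) : ofRealC 𝕜 (f * g) = ofRealC 𝕜 f * ofRealC 𝕜 g := by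
  ext x
  simp [ofRealC_apply]

lemma ofRealC_one : ofRealC 𝕜 (1 : C(K, ℝ)) = 1 := by
  ext x
  simp [ofRealC_apply]

lemma norm_ofRealC (f : C(K, ℝ)) : ‖ofRealC 𝕜 f‖ = ‖f‖ := by
  apply le_antisymm
  · refine (ContinuousMap.norm_le _ (norm_nonneg f)).2 fun x => ?_
    rw [ofRealC_apply, RCLike.norm_ofReal, ← Real.norm_eq_abs]
    exact f.norm_coe_le_norm x
  · refine (ContinuousMap.norm_le _ (norm_nonneg _)).2 fun x => ?_
    rw [Real.norm_eq_abs, ← RCLike.norm_ofReal (K := 𝕜), ← ofRealC_apply]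
    exact (ofRealC 𝕜 f).norm_coe_le_norm x

variable (M : CKModule 𝕜 K Γ)

lemma smul_ofReal_mul (f g : C(K, ℝ)) (s : Γ) :
    M.smul (ofRealC 𝕜 (f * g)) s = M.smul (ofRealC 𝕜 f) (M.smul (ofRealC 𝕜 g) s) := by
  rw [ofRealC_mul]; exact M.mul_smul _ _ s

lemma smul_ofReal_add (f g : C(K, ℝ)) (s : Γ) :
    M.smul (ofRealC 𝕜 (f + g)) s = M.smul (ofRealC 𝕜 f) s + M.smul (ofRealC 𝕜 g) s := by
  rw [ofRealC_add, map_add, ContinuousLinearMap.add_apply]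

lemma smul_ofReal_one (s : Γ) : M.smul (ofRealC 𝕜 (1 : C(K, ℝ))) s = s := by
  rw [ofRealC_one]; exact M.one_smul s

lemma norm_smul_ofReal_le (f : C(K, ℝ)) (s : Γ) :
    ‖M.smul (ofRealC 𝕜 f) s‖ ≤ ‖f‖ * ‖s‖ := by
  rw [← norm_ofRealC (𝕜 := 𝕜) f]; exact M.norm_smul_le _ s

end Aux

section Core

variable (M : CKModule 𝕜 K Γ)

/-- Monotonicity of the module action: if `0 ≤ g ≤ f` then `‖g•s‖ ≤ ‖f•s‖`. -/
lemma smul_mono {g f : C(K, ℝ)} (hg : ∀ x, 0 ≤ g x) (hgf : ∀ x, g x ≤ f x) (s : Γ) :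
    ‖M.smul (ofRealC 𝕜 g) s‖ ≤ ‖M.smul (ofRealC 𝕜 f) s‖ := by
  refine le_of_forall_pos_le_add fun ε hε => ?_
  set δ : ℝ := ε / (‖s‖ + 1) with hδdef
  have hδ : 0 < δ := div_pos hε (by positivity)
  have hfpos : ∀ x, 0 < f x + δ := fun x => by
    have := (hg x).trans (hgf x); linarith
  set u : C(K, ℝ) := ⟨fun x => g x / (f x + δ),
    (map_continuous g).div ((map_continuous f).add continuous_const)
      (fun x => (hfpos x).ne')⟩ with hu_def
  have hu_apply : ∀ x, u x = g x / (f x + δ) := fun x => rfl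
  have hu0 : ∀ x, 0 ≤ u x := fun x => div_nonneg (hg x) (hfpos x).le
  have hu1 : ∀ x, u x ≤ 1 := fun x => by
    rw [hu_apply, div_le_one (hfpos x)]; linarith [hgf x]
  have hdecomp : g = u * f + ContinuousMap.const K δ * u := by
    ext x
    simp only [ContinuousMap.add_apply, ContinuousMap.mul_apply, ContinuousMap.const_apply,
      hu_apply]
    field_simp
    rw [eq_div_iff (hfpos x).ne']
  have hnorm_u : ‖u‖ ≤ 1 := (ContinuousMap.norm_le _ zero_le_one).2 fun x => by
    rw [Real.norm_eq_abs, abs_of_nonneg (hu0 x)]; exact hu1 x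
  have hnorm_cu : ‖ContinuousMap.const K δ * u‖ ≤ δ :=
    (ContinuousMap.norm_le _ hδ.le).2 fun x => by
      simp only [ContinuousMap.mul_apply, ContinuousMap.const_apply, Real.norm_eq_abs]
      rw [abs_of_nonneg (mul_nonneg hδ.le (hu0 x))]
      calc δ * u x ≤ δ * 1 := mul_le_mul_of_nonneg_left (hu1 x) hδ.le
        _ = δ := mul_one δ
  calc ‖M.smul (ofRealC 𝕜 g) s‖
      = ‖M.smul (ofRealC 𝕜 (u * f + ContinuousMap.const K δ * u)) s‖ := by rw [← hdecomp]
    _ ≤ ‖M.smul (ofRealC 𝕜 (u * f)) s‖ + ‖M.smul (ofRealC 𝕜 (ContinuousMap.const K δ * u)) s‖ := by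
        rw [smul_ofReal_add]; exact norm_add_le _ _
    _ ≤ ‖M.smul (ofRealC 𝕜 f) s‖ + δ * ‖s‖ := by
        gcongr
        · rw [smul_ofReal_mul]
          calc ‖M.smul (ofRealC 𝕜 u) (M.smul (ofRealC 𝕜 f) s)‖
              ≤ ‖u‖ * ‖M.smul (ofRealC 𝕜 f) s‖ := norm_smul_ofReal_le M u _
            _ ≤ 1 * ‖M.smul (ofRealC 𝕜 f) s‖ := by gcongr
            _ = _ := one_mul _
        · calc ‖M.smul (ofRealC 𝕜 (ContinuousMap.const K δ * u)) s‖
              ≤ ‖ContinuousMap.const K δ * u‖ * ‖s‖ := norm_smul_ofReal_le M _ s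
            _ ≤ δ * ‖s‖ := by gcongr
    _ ≤ ‖M.smul (ofRealC 𝕜 f) s‖ + ε := by
        gcongr
        rw [hδdef, div_mul_eq_mul_div, div_le_iff₀ (by positivity)]
        nlinarith [norm_nonneg s]

/-- Key bound: if `0 ≤ g ≤ q·(f+δ)` with `0 ≤ q ≤ 1`, then
`‖ψ(g•s)‖ ≤ ‖f•ψ‖·‖q•s‖ + 2δ‖ψ‖‖s‖`. -/
lemma dual_smul_bound {f g q : C(K, ℝ)} {δ : ℝ} (hδ : 0 < δ)
    (hf : ∀ x, 0 ≤ f x) (hg : ∀ x, 0 ≤ g x) (hq0 : ∀ x, 0 ≤ q x) (hq1 : ∀ x, q x ≤ 1)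
    (hgq : ∀ x, g x ≤ q x * (f x + δ)) (ψ : Γ →L[𝕜] 𝕜) (s : Γ) :
    ‖ψ (M.smul (ofRealC 𝕜 g) s)‖ ≤
      ‖M.dualSmul (ofRealC 𝕜 f) ψ‖ * ‖M.smul (ofRealC 𝕜 q) s‖ + 2 * δ * ‖ψ‖ * ‖s‖ := by
  have hDpos : ∀ x, 0 < f x + 2 * δ := fun x => by have := hf x; linarith
  set u : C(K, ℝ) := ⟨fun x => g x / (f x + 2 * δ),
    (map_continuous g).div ((map_continuous f).add continuous_const)
      (fun x => (hDpos x).ne')⟩ with hu_def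
  have hu_apply : ∀ x, u x = g x / (f x + 2 * δ) := fun x => rfl
  have hu0 : ∀ x, 0 ≤ u x := fun x => div_nonneg (hg x) (hDpos x).le
  have huq : ∀ x, u x ≤ q x := fun x => by
    rw [hu_apply, div_le_iff₀ (hDpos x)]
    calc g x ≤ q x * (f x + δ) := hgq x
      _ ≤ q x * (f x + 2 * δ) := by nlinarith [hq0 x]
  have hu1 : ∀ x, u x ≤ 1 := fun x => (huq x).trans (hq1 x)
  have hdecomp : g = u * f + ContinuousMap.const K (2 * δ) * u := by
    ext x
    simp only [ContinuousMap.add_apply, ContinuousMap.mul_apply, ContinuousMap.const_apply,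
      hu_apply]
    field_simp
    rw [eq_div_iff (hDpos x).ne']
  have hnorm_cu : ‖ContinuousMap.const K (2 * δ) * u‖ ≤ 2 * δ :=
    (ContinuousMap.norm_le _ (by linarith)).2 fun x => by
      simp only [ContinuousMap.mul_apply, ContinuousMap.const_apply, Real.norm_eq_abs]
      rw [abs_of_nonneg (mul_nonneg (by linarith) (hu0 x))]
      calc 2 * δ * u x ≤ 2 * δ * 1 := mul_le_mul_of_nonneg_left (hu1 x) (by linarith)
        _ = 2 * δ := mul_one _
  have hsplit : ψ (M.smul (ofRealC 𝕜 g) s) =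
      ψ (M.smul (ofRealC 𝕜 (u * f)) s) +
        ψ (M.smul (ofRealC 𝕜 (ContinuousMap.const K (2 * δ) * u)) s) := by
    conv_lhs => rw [hdecomp]
    rw [smul_ofReal_add, map_add]
  have hterm1 : ‖ψ (M.smul (ofRealC 𝕜 (u * f)) s)‖ ≤
      ‖M.dualSmul (ofRealC 𝕜 f) ψ‖ * ‖M.smul (ofRealC 𝕜 q) s‖ := by
    have h1 : M.smul (ofRealC 𝕜 (u * f)) s = M.smul (ofRealC 𝕜 f) (M.smul (ofRealC 𝕜 u) s) := by
      rw [mul_comm u f, smul_ofReal_mul]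
    rw [h1]
    have h2 : ψ (M.smul (ofRealC 𝕜 f) (M.smul (ofRealC 𝕜 u) s)) =
        (M.dualSmul (ofRealC 𝕜 f) ψ) (M.smul (ofRealC 𝕜 u) s) := rfl
    rw [h2]
    calc ‖(M.dualSmul (ofRealC 𝕜 f) ψ) (M.smul (ofRealC 𝕜 u) s)‖
        ≤ ‖M.dualSmul (ofRealC 𝕜 f) ψ‖ * ‖M.smul (ofRealC 𝕜 u) s‖ :=
          ContinuousLinearMap.le_opNorm _ _
      _ ≤ ‖M.dualSmul (ofRealC 𝕜 f) ψ‖ * ‖M.smul (ofRealC 𝕜 q) s‖ := by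
          gcongr
          exact smul_mono M hu0 huq s
  have hterm2 : ‖ψ (M.smul (ofRealC 𝕜 (ContinuousMap.const K (2 * δ) * u)) s)‖ ≤
      2 * δ * ‖ψ‖ * ‖s‖ := by
    calc ‖ψ (M.smul (ofRealC 𝕜 (ContinuousMap.const K (2 * δ) * u)) s)‖
        ≤ ‖ψ‖ * ‖M.smul (ofRealC 𝕜 (ContinuousMap.const K (2 * δ) * u)) s‖ :=
          ContinuousLinearMap.le_opNorm _ _
      _ ≤ ‖ψ‖ * (‖ContinuousMap.const K (2 * δ) * u‖ * ‖s‖) := by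
          gcongr; exact norm_smul_ofReal_le M _ s
      _ ≤ ‖ψ‖ * (2 * δ * ‖s‖) := by gcongr
      _ = 2 * δ * ‖ψ‖ * ‖s‖ := by ring
  calc ‖ψ (M.smul (ofRealC 𝕜 g) s)‖
      ≤ ‖ψ (M.smul (ofRealC 𝕜 (u * f)) s)‖ +
        ‖ψ (M.smul (ofRealC 𝕜 (ContinuousMap.const K (2 * δ) * u)) s)‖ := by
        rw [hsplit]; exact norm_add_le _ _
    _ ≤ _ := add_le_add hterm1 hterm2

/-- Monotonicity of the dual action. -/
lemma dual_smul_mono {g f : C(K, ℝ)} (hg : ∀ x, 0 ≤ g x) (hf : ∀ x, 0 ≤ f x)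
    (hgf : ∀ x, g x ≤ f x) (ψ : Γ →L[𝕜] 𝕜) :
    ‖M.dualSmul (ofRealC 𝕜 g) ψ‖ ≤ ‖M.dualSmul (ofRealC 𝕜 f) ψ‖ := by
  refine le_of_forall_pos_le_add fun ε hε => ?_
  set δ : ℝ := ε / (2 * ‖ψ‖ + 1) with hδdef
  have hδ : 0 < δ := div_pos hε (by positivity)
  refine ContinuousLinearMap.opNorm_le_bound _ (by positivity) fun s => ?_
  have hkey := dual_smul_bound M hδ hf hg (q := 1) (fun x => by simp)
    (fun x => by simp) (fun x => by simpa using (hgf x).trans (by linarith [hδ])) ψ s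
  rw [smul_ofReal_one] at hkey
  have h2 : 2 * δ * ‖ψ‖ ≤ ε := by
    have hne : (2 * ‖ψ‖ + 1) ≠ 0 := by positivity
    have heq : δ * (2 * ‖ψ‖ + 1) = ε := div_mul_cancel₀ ε hne
    nlinarith [norm_nonneg ψ, hδ.le]
  have : (M.dualSmul (ofRealC 𝕜 g) ψ) s = ψ (M.smul (ofRealC 𝕜 g) s) := rfl
  rw [this]
  calc ‖ψ (M.smul (ofRealC 𝕜 g) s)‖
      ≤ ‖M.dualSmul (ofRealC 𝕜 f) ψ‖ * ‖s‖ + 2 * δ * ‖ψ‖ * ‖s‖ := hkey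
    _ ≤ ‖M.dualSmul (ofRealC 𝕜 f) ψ‖ * ‖s‖ + ε * ‖s‖ := by
        have := mul_le_mul_of_nonneg_right h2 (norm_nonneg s)
        linarith
    _ = (‖M.dualSmul (ofRealC 𝕜 f) ψ‖ + ε) * ‖s‖ := by ring

end Core
section ALtoAM

variable (M : CKModule 𝕜 K Γ)

theorem al_to_dualAM (hAL : M.IsAL) : M.DualIsAM := by
  intro f₁ f₂ h₁ h₂ ψ
  have hsup0 : ∀ x, 0 ≤ (f₁ ⊔ f₂) x := fun x => by
    rw [ContinuousMap.sup_apply]; exact le_max_of_le_left (h₁ x)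
  apply le_antisymm
  · -- upper bound: ‖(f₁ ⊔ f₂)•ψ‖ ≤ max
    refine le_of_forall_pos_le_add fun ε hε => ?_
    set N : ℝ := max ‖M.dualSmul (ofRealC 𝕜 f₁) ψ‖ ‖M.dualSmul (ofRealC 𝕜 f₂) ψ‖ with hNdef
    have hN0 : 0 ≤ N := le_trans (norm_nonneg _) (le_max_left _ _)
    set δ : ℝ := ε / (4 * ‖ψ‖ + 1) with hδdef
    have hδ : 0 < δ := div_pos hε (by positivity)
    have h4δ : 4 * δ * ‖ψ‖ ≤ ε := by
      have hne : (4 * ‖ψ‖ + 1) ≠ 0 := by positivity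
      have heq : δ * (4 * ‖ψ‖ + 1) = ε := div_mul_cancel₀ ε hne
      nlinarith [norm_nonneg ψ, hδ.le]
    refine ContinuousLinearMap.opNorm_le_bound _ (by positivity) fun s => ?_
    -- the continuous partition function p
    set p : C(K, ℝ) := 1 ⊓ (0 ⊔ (δ⁻¹ • (f₁ - f₂) + 1)) with hpdef
    have hp_apply : ∀ x, p x = min 1 (max 0 (δ⁻¹ * (f₁ x - f₂ x) + 1)) := fun x => by
      simp [hpdef, ContinuousMap.inf_apply, ContinuousMap.sup_apply, min_def, max_def]
    have hp0 : ∀ x, 0 ≤ p x := fun x => by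
      rw [hp_apply]; exact le_min zero_le_one (le_max_left _ _)
    have hp1 : ∀ x, p x ≤ 1 := fun x => by rw [hp_apply]; exact min_le_left _ _
    have hkey1 : ∀ x, 0 < p x → f₂ x < f₁ x + δ := fun x hx => by
      rw [hp_apply] at hx
      have h1 : 0 < max 0 (δ⁻¹ * (f₁ x - f₂ x) + 1) := lt_of_lt_of_le hx (min_le_right _ _)
      have h2 : 0 < δ⁻¹ * (f₁ x - f₂ x) + 1 := by
        by_contra h
        push_neg at h
        rw [max_eq_left h] at h1
        exact lt_irrefl 0 h1
      have h3 : δ⁻¹ * (f₁ x - f₂ x) > -1 := by linarith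
      have h4 : f₁ x - f₂ x > -δ := by
        have := mul_lt_mul_of_pos_left h3 hδ
        rw [← mul_assoc, mul_inv_cancel₀ hδ.ne', one_mul] at this
        linarith
      linarith
    have hkey2 : ∀ x, p x < 1 → f₁ x < f₂ x := fun x hx => by
      rw [hp_apply] at hx
      have h1 : max 0 (δ⁻¹ * (f₁ x - f₂ x) + 1) < 1 := by
        rcases min_lt_iff.1 hx with h | h
        · exact absurd h (lt_irrefl 1)
        · exact h
      have h2 : δ⁻¹ * (f₁ x - f₂ x) + 1 < 1 := lt_of_le_of_lt (le_max_right _ _) h1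
      have h3 : δ⁻¹ * (f₁ x - f₂ x) < 0 := by linarith
      nlinarith [inv_pos.2 hδ]
    -- pointwise bounds for L1
    have hA : ∀ x, (p * (f₁ ⊔ f₂)) x ≤ p x * (f₁ x + δ) := fun x => by
      rw [ContinuousMap.mul_apply, ContinuousMap.sup_apply]
      rcases eq_or_lt_of_le (hp0 x) with h | h
      · rw [← h]; simp
      · have hle : max (f₁ x) (f₂ x) ≤ f₁ x + δ :=
          max_le (by linarith) (hkey1 x h).le
        exact mul_le_mul_of_nonneg_left hle (hp0 x)
    have hB : ∀ x, ((1 - p) * (f₁ ⊔ f₂)) x ≤ (1 - p) x * (f₂ x + δ) := fun x => by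
      rw [ContinuousMap.mul_apply, ContinuousMap.sup_apply]
      rcases eq_or_lt_of_le (hp1 x) with h | h
      · have : (1 - p) x = 0 := by
          simp [ContinuousMap.sub_apply, h]
        rw [this]; simp
      · have hle : max (f₁ x) (f₂ x) ≤ f₂ x + δ :=
          max_le (by linarith [hkey2 x h]) (by linarith)
        have h1p0 : 0 ≤ (1 - p) x := by
          simp only [ContinuousMap.sub_apply, ContinuousMap.one_apply]
          linarith [hp1 x]
        exact mul_le_mul_of_nonneg_left hle h1p0
    have hpg0 : ∀ x, 0 ≤ (p * (f₁ ⊔ f₂)) x := fun x => by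
      rw [ContinuousMap.mul_apply]
      exact mul_nonneg (hp0 x) (hsup0 x)
    have h1pg0 : ∀ x, 0 ≤ ((1 - p) * (f₁ ⊔ f₂)) x := fun x => by
      rw [ContinuousMap.mul_apply]
      refine mul_nonneg ?_ (hsup0 x)
      simp only [ContinuousMap.sub_apply, ContinuousMap.one_apply]
      linarith [hp1 x]
    have h1p0' : ∀ x, 0 ≤ (1 - p) x := fun x => by
      simp only [ContinuousMap.sub_apply, ContinuousMap.one_apply]
      linarith [hp1 x]
    have h1p1' : ∀ x, (1 - p) x ≤ 1 := fun x => by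
      simp only [ContinuousMap.sub_apply, ContinuousMap.one_apply]
      linarith [hp0 x]
    -- split
    have hsplit : M.smul (ofRealC 𝕜 (f₁ ⊔ f₂)) s =
        M.smul (ofRealC 𝕜 (p * (f₁ ⊔ f₂))) s + M.smul (ofRealC 𝕜 ((1 - p) * (f₁ ⊔ f₂))) s := by
      rw [← smul_ofReal_add]
      congr 1
      congr 1
      ring
    -- AL identity applied to p, 1-p
    have hALuse : ‖M.smul (ofRealC 𝕜 p) s‖ + ‖M.smul (ofRealC 𝕜 (1 - p)) s‖ = ‖s‖ := by
      rw [← hAL p (1 - p) hp0 h1p0' s, ← smul_ofReal_add]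
      have : p + (1 - p) = (1 : C(K, ℝ)) := by ring
      rw [this, smul_ofReal_one]
    have hb1 := dual_smul_bound M hδ h₁ hpg0 hp0 hp1 (fun x => hA x) ψ s
    have hb2 := dual_smul_bound M hδ h₂ h1pg0 h1p0' h1p1' (fun x => hB x) ψ s
    have happ : (M.dualSmul (ofRealC 𝕜 (f₁ ⊔ f₂)) ψ) s = ψ (M.smul (ofRealC 𝕜 (f₁ ⊔ f₂)) s) := rfl
    rw [happ]
    calc ‖ψ (M.smul (ofRealC 𝕜 (f₁ ⊔ f₂)) s)‖
        ≤ ‖ψ (M.smul (ofRealC 𝕜 (p * (f₁ ⊔ f₂))) s)‖ +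
          ‖ψ (M.smul (ofRealC 𝕜 ((1 - p) * (f₁ ⊔ f₂))) s)‖ := by
          rw [hsplit, map_add]; exact norm_add_le _ _
      _ ≤ (‖M.dualSmul (ofRealC 𝕜 f₁) ψ‖ * ‖M.smul (ofRealC 𝕜 p) s‖ + 2 * δ * ‖ψ‖ * ‖s‖) +
          (‖M.dualSmul (ofRealC 𝕜 f₂) ψ‖ * ‖M.smul (ofRealC 𝕜 (1 - p)) s‖ + 2 * δ * ‖ψ‖ * ‖s‖) :=
          add_le_add hb1 hb2
      _ ≤ (N * ‖M.smul (ofRealC 𝕜 p) s‖ + 2 * δ * ‖ψ‖ * ‖s‖) +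
          (N * ‖M.smul (ofRealC 𝕜 (1 - p)) s‖ + 2 * δ * ‖ψ‖ * ‖s‖) := by
          gcongr
          · exact le_max_left _ _
          · exact le_max_right _ _
      _ = N * (‖M.smul (ofRealC 𝕜 p) s‖ + ‖M.smul (ofRealC 𝕜 (1 - p)) s‖) +
          4 * δ * ‖ψ‖ * ‖s‖ := by ring
      _ = N * ‖s‖ + 4 * δ * ‖ψ‖ * ‖s‖ := by rw [hALuse]
      _ ≤ N * ‖s‖ + ε * ‖s‖ := by
          have := mul_le_mul_of_nonneg_right h4δ (norm_nonneg s)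
          linarith
      _ = (N + ε) * ‖s‖ := by ring
  · -- lower bound: max ≤ ‖(f₁ ⊔ f₂)•ψ‖
    refine max_le ?_ ?_
    · refine dual_smul_mono M h₁ hsup0 (fun x => ?_) ψ
      rw [ContinuousMap.sup_apply]; exact le_max_left _ _
    · refine dual_smul_mono M h₂ hsup0 (fun x => ?_) ψ
      rw [ContinuousMap.sup_apply]; exact le_max_right _ _

end ALtoAM
section AMtoAL

variable (M : CKModule 𝕜 K Γ)

lemma am_finset (hAM : M.IsAM) {ι : Type*} (S : Finset ι) (hS : S.Nonempty)
    (g : ι → C(K, ℝ)) (hg : ∀ i x, 0 ≤ g i x) (t : Γ) :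
    ‖M.smul (ofRealC 𝕜 (S.sup' hS g)) t‖ = S.sup' hS fun i => ‖M.smul (ofRealC 𝕜 (g i)) t‖ := by
  induction hS using Finset.Nonempty.cons_induction with
  | singleton i => simp
  | cons a s ha hs ih =>
    have hsup0 : ∀ x, 0 ≤ (s.sup' hs g) x := fun x => by
      have hj := hs.choose_spec
      have hle : g hs.choose ≤ s.sup' hs g := Finset.le_sup' g hj
      exact le_trans (hg hs.choose x) (ContinuousMap.le_def.1 hle x)
    rw [Finset.sup'_cons (H := hs), Finset.sup'_cons (H := hs), hAM (g a) (s.sup' hs g) (hg a) hsup0 t, ih]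

lemma norm_le_local (hAM : M.IsAM) [Nonempty K] (t : Γ) (c : ℝ)
    (H : ∀ x : K, ∃ g : C(K, ℝ), (∀ y, 0 ≤ g y) ∧ (∀ y, g y ≤ 1) ∧
      (∀ᶠ y in nhds x, g y = 1) ∧ ‖M.smul (ofRealC 𝕜 g) t‖ ≤ c) : ‖t‖ ≤ c := by
  choose g hg0 hg1 hgx hgc using H
  have hxV : ∀ x, x ∈ interior {y | g x y = 1} := fun x =>
    mem_interior_iff_mem_nhds.2 (hgx x)
  obtain ⟨S, hScover⟩ := isCompact_univ.elim_finite_subcover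
    (fun x => interior {y | g x y = 1}) (fun x => isOpen_interior)
    (fun x _ => Set.mem_iUnion.2 ⟨x, hxV x⟩)
  have hS : S.Nonempty := by
    obtain ⟨x0⟩ := (inferInstance : Nonempty K)
    obtain ⟨i, hiS, -⟩ := Set.mem_iUnion₂.1 (hScover (Set.mem_univ x0))
    exact ⟨i, hiS⟩
  have hG1 : S.sup' hS g = 1 := by
    ext y
    obtain ⟨i, hiS, hiy⟩ := Set.mem_iUnion₂.1 (hScover (Set.mem_univ y))
    have h1' := interior_subset hiy
    simp only [Set.mem_setOf_eq] at h1'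
    have h1 : g i y = 1 := h1'
    have happly : (S.sup' hS g) y = S.sup' hS fun i => g i y := by
      rw [ContinuousMap.sup'_apply]
    rw [happly, ContinuousMap.one_apply]
    refine le_antisymm (Finset.sup'_le _ _ fun j _ => hg1 j y) ?_
    rw [← h1]
    exact Finset.le_sup' (fun j => g j y) hiS
  calc ‖t‖ = ‖M.smul (ofRealC 𝕜 (S.sup' hS g)) t‖ := by rw [hG1, smul_ofReal_one]
    _ = S.sup' hS fun i => ‖M.smul (ofRealC 𝕜 (g i)) t‖ :=
        am_finset M hAM S hS g hg0 t
    _ ≤ c := Finset.sup'_le _ _ fun i _ => hgc i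

lemma convex_comb (hAM : M.IsAM) [Nonempty K] [T2Space K]
    (u₁ u₂ : C(K, ℝ)) (h₁ : ∀ x, 0 ≤ u₁ x) (h₂ : ∀ x, 0 ≤ u₂ x) (hsum : u₁ + u₂ = 1)
    (s₁ s₂ : Γ) :
    ‖M.smul (ofRealC 𝕜 u₁) s₁ + M.smul (ofRealC 𝕜 u₂) s₂‖ ≤ max ‖s₁‖ ‖s₂‖ := by
  refine le_of_forall_pos_le_add fun ε hε => ?_
  set η : ℝ := ε / (‖s₁‖ + ‖s₂‖ + 1) with hηdef
  have hη : 0 < η := div_pos hε (by positivity)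
  have hηbound : η * (‖s₁‖ + ‖s₂‖) ≤ ε := by
    have hne : (‖s₁‖ + ‖s₂‖ + 1) ≠ 0 := by positivity
    have heq : η * (‖s₁‖ + ‖s₂‖ + 1) = ε := div_mul_cancel₀ ε hne
    nlinarith [hη.le]
  refine le_trans (norm_le_local M hAM _ (max ‖s₁‖ ‖s₂‖ + η * (‖s₁‖ + ‖s₂‖)) ?_) (by linarith)
  intro x
  set U : Set K := {y | u₁ y < u₁ x + η ∧ u₂ y < u₂ x + η} with hUdef
  have hUopen : IsOpen U := by
    have e1 : IsOpen {y | u₁ y < u₁ x + η} := isOpen_lt (map_continuous u₁) continuous_const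
    have e2 : IsOpen {y | u₂ y < u₂ x + η} := isOpen_lt (map_continuous u₂) continuous_const
    exact e1.inter e2
  have hxU : x ∈ U := ⟨by linarith, by linarith⟩
  obtain ⟨Vc, hVmem, hVclosed, hVU⟩ := exists_mem_nhds_isClosed_subset (hUopen.mem_nhds hxU)
  have hxW : x ∈ interior Vc := mem_interior_iff_mem_nhds.2 hVmem
  have hclW : closure (interior Vc) ⊆ U :=
    (closure_minimal interior_subset hVclosed).trans hVU
  obtain ⟨g, hg0U, hg1W, hg01⟩ := exists_continuous_zero_one_of_isClosed
    (isClosed_compl_iff.2 hUopen) isClosed_closure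
    (disjoint_compl_left.mono_right hclW)
  refine ⟨g, fun y => (hg01 y).1, fun y => (hg01 y).2, ?_, ?_⟩
  · filter_upwards [isOpen_interior.mem_nhds hxW] with y hy
    have := hg1W (subset_closure hy)
    simpa using this
  · -- the norm bound
    have hgmul : M.smul (ofRealC 𝕜 g) (M.smul (ofRealC 𝕜 u₁) s₁ + M.smul (ofRealC 𝕜 u₂) s₂) =
        M.smul (ofRealC 𝕜 (g * u₁)) s₁ + M.smul (ofRealC 𝕜 (g * u₂)) s₂ := by
      rw [map_add, smul_ofReal_mul, smul_ofReal_mul]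
    have hbound : ∀ (u : C(K, ℝ)), (∀ y, 0 ≤ u y) → (∀ y, y ∈ U → u y < u x + η) →
        ‖g * u‖ ≤ u x + η := by
      intro u hu0 huU
      refine (ContinuousMap.norm_le _ (by linarith [hu0 x])).2 fun y => ?_
      rw [ContinuousMap.mul_apply, Real.norm_eq_abs,
        abs_of_nonneg (mul_nonneg (hg01 y).1 (hu0 y))]
      by_cases hy : y ∈ U
      · calc g y * u y ≤ 1 * u y := mul_le_mul_of_nonneg_right (hg01 y).2 (hu0 y)
          _ = u y := one_mul _
          _ ≤ u x + η := (huU y hy).le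
      · have : g y = 0 := hg0U hy
        rw [this, zero_mul]
        linarith [hu0 x]
    have hb1 : ‖g * u₁‖ ≤ u₁ x + η := hbound u₁ h₁ fun y hy => hy.1
    have hb2 : ‖g * u₂‖ ≤ u₂ x + η := hbound u₂ h₂ fun y hy => hy.2
    have hsumx : u₁ x + u₂ x = 1 := by
      have := ContinuousMap.congr_fun hsum x
      simpa using this
    rw [hgmul]
    calc ‖M.smul (ofRealC 𝕜 (g * u₁)) s₁ + M.smul (ofRealC 𝕜 (g * u₂)) s₂‖
        ≤ ‖M.smul (ofRealC 𝕜 (g * u₁)) s₁‖ + ‖M.smul (ofRealC 𝕜 (g * u₂)) s₂‖ :=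
          norm_add_le _ _
      _ ≤ ‖g * u₁‖ * ‖s₁‖ + ‖g * u₂‖ * ‖s₂‖ :=
          add_le_add (norm_smul_ofReal_le M _ _) (norm_smul_ofReal_le M _ _)
      _ ≤ (u₁ x + η) * ‖s₁‖ + (u₂ x + η) * ‖s₂‖ := by gcongr
      _ = (u₁ x * ‖s₁‖ + u₂ x * ‖s₂‖) + η * (‖s₁‖ + ‖s₂‖) := by ring
      _ ≤ (u₁ x * max ‖s₁‖ ‖s₂‖ + u₂ x * max ‖s₁‖ ‖s₂‖) + η * (‖s₁‖ + ‖s₂‖) := by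
          have a1 := mul_le_mul_of_nonneg_left (le_max_left ‖s₁‖ ‖s₂‖) (h₁ x)
          have a2 := mul_le_mul_of_nonneg_left (le_max_right ‖s₁‖ ‖s₂‖) (h₂ x)
          linarith
      _ = (u₁ x + u₂ x) * max ‖s₁‖ ‖s₂‖ + η * (‖s₁‖ + ‖s₂‖) := by ring
      _ = max ‖s₁‖ ‖s₂‖ + η * (‖s₁‖ + ‖s₂‖) := by rw [hsumx, one_mul]

end AMtoAL
section NearMax

lemma exists_near_max (φ : Γ →L[𝕜] 𝕜) {ε : ℝ} (hε : 0 < ε) :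
    ∃ s : Γ, ‖s‖ ≤ 1 ∧ ‖φ‖ - ε ≤ ‖φ s‖ := by
  by_cases h : ‖φ‖ ≤ ε
  · exact ⟨0, by simp, by simp; linarith⟩
  · push_neg at h
    by_contra hcon
    push_neg at hcon
    have hbound : ∀ s : Γ, ‖φ s‖ ≤ (‖φ‖ - ε) * ‖s‖ := by
      intro s
      rcases eq_or_ne s 0 with rfl | hs
      · simp
      · have hns : 0 < ‖s‖ := norm_pos_iff.2 hs
        set w : Γ := ((‖s‖ : ℝ) : 𝕜)⁻¹ • s with hw
        have hwn : ‖w‖ = 1 := by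
          rw [hw, norm_smul, norm_inv, RCLike.norm_ofReal, abs_of_nonneg hns.le,
            inv_mul_cancel₀ hns.ne']
        have h2 := hcon w (le_of_eq hwn)
        rw [hw, map_smul, smul_eq_mul, norm_mul, norm_inv, RCLike.norm_ofReal,
          abs_of_nonneg hns.le] at h2
        calc ‖φ s‖ = ‖s‖ * (‖s‖⁻¹ * ‖φ s‖) := by field_simp
          _ ≤ ‖s‖ * (‖φ‖ - ε) := mul_le_mul_of_nonneg_left h2.le hns.le
          _ = (‖φ‖ - ε) * ‖s‖ := mul_comm _ _
    have := ContinuousLinearMap.opNorm_le_bound φ (by linarith) hbound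
    linarith

lemma exists_unit_rotation (z : 𝕜) : ∃ c : 𝕜, ‖c‖ = 1 ∧ c * z = ((‖z‖ : ℝ) : 𝕜) := by
  rcases eq_or_ne z 0 with rfl | hz
  · exact ⟨1, norm_one, by simp⟩
  · have hnz : (0 : ℝ) < ‖z‖ := norm_pos_iff.2 hz
    refine ⟨(starRingEnd 𝕜) z * ((‖z‖ : ℝ) : 𝕜)⁻¹, ?_, ?_⟩
    · rw [norm_mul, norm_inv, RCLike.norm_conj, RCLike.norm_ofReal, abs_of_nonneg hnz.le,
        mul_inv_cancel₀ hnz.ne']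
    · have hconj : (starRingEnd 𝕜) z * z = ((‖z‖ : ℝ) : 𝕜) ^ 2 := RCLike.conj_mul z
      have hcast : ((‖z‖ : ℝ) : 𝕜) ≠ 0 := by
        simpa using hnz.ne'
      field_simp
      rw [hconj]

end NearMax

section AMmain

variable (M : CKModule 𝕜 K Γ)

set_option maxHeartbeats 1000000 in
theorem am_to_dualAL [Nonempty K] [T2Space K] (hAM : M.IsAM) : M.DualIsAL := by
  intro f₁ f₂ h₁ h₂ ψ
  have hadd : M.dualSmul (ofRealC 𝕜 f₁) ψ + M.dualSmul (ofRealC 𝕜 f₂) ψ =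
      M.dualSmul (ofRealC 𝕜 (f₁ + f₂)) ψ := by
    unfold CKModule.dualSmul
    rw [ofRealC_add, map_add, ContinuousLinearMap.comp_add]
  apply le_antisymm
  · exact norm_add_le _ _
  · rw [hadd]
    refine le_of_forall_pos_le_add fun ε hε => ?_
    have hε4 : 0 < ε / 4 := by linarith
    obtain ⟨s₁, hs₁n, hs₁⟩ := exists_near_max (M.dualSmul (ofRealC 𝕜 f₁) ψ) hε4
    obtain ⟨s₂, hs₂n, hs₂⟩ := exists_near_max (M.dualSmul (ofRealC 𝕜 f₂) ψ) hε4
    obtain ⟨c₁, hc₁n, hc₁⟩ := exists_unit_rotation ((M.dualSmul (ofRealC 𝕜 f₁) ψ) s₁)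
    obtain ⟨c₂, hc₂n, hc₂⟩ := exists_unit_rotation ((M.dualSmul (ofRealC 𝕜 f₂) ψ) s₂)
    set r₁ : ℝ := ‖(M.dualSmul (ofRealC 𝕜 f₁) ψ) s₁‖ with hr₁def
    set r₂ : ℝ := ‖(M.dualSmul (ofRealC 𝕜 f₂) ψ) s₂‖ with hr₂def
    set t₁ : Γ := c₁ • s₁ with ht₁def
    set t₂ : Γ := c₂ • s₂ with ht₂def
    have ht₁n : ‖t₁‖ ≤ 1 := by rw [ht₁def, norm_smul, hc₁n, one_mul]; exact hs₁n
    have ht₂n : ‖t₂‖ ≤ 1 := by rw [ht₂def, norm_smul, hc₂n, one_mul]; exact hs₂n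
    have hψ₁ : ψ (M.smul (ofRealC 𝕜 f₁) t₁) = ((r₁ : ℝ) : 𝕜) := by
      rw [ht₁def, map_smul, map_smul, smul_eq_mul]
      exact hc₁
    have hψ₂ : ψ (M.smul (ofRealC 𝕜 f₂) t₂) = ((r₂ : ℝ) : 𝕜) := by
      rw [ht₂def, map_smul, map_smul, smul_eq_mul]
      exact hc₂
    -- choose δ
    set δ : ℝ := ε / (4 * ‖ψ‖ + 4) with hδdef
    have hδ : 0 < δ := div_pos hε (by positivity)
    have hδb : 2 * δ * ‖ψ‖ ≤ ε / 2 := by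
      have hne : (4 * ‖ψ‖ + 4) ≠ 0 := by positivity
      have heq : δ * (4 * ‖ψ‖ + 4) = ε := div_mul_cancel₀ ε hne
      nlinarith [norm_nonneg ψ, hδ.le]
    -- the partition functions
    have hDpos : ∀ x, 0 < f₁ x + f₂ x + 2 * δ := fun x => by
      have := h₁ x; have := h₂ x; linarith
    set u₁ : C(K, ℝ) := ⟨fun x => (f₁ x + δ) / (f₁ x + f₂ x + 2 * δ),
      ((map_continuous f₁).add continuous_const).div
        (((map_continuous f₁).add (map_continuous f₂)).add continuous_const)
        (fun x => (hDpos x).ne')⟩ with hu₁def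
    set u₂ : C(K, ℝ) := ⟨fun x => (f₂ x + δ) / (f₁ x + f₂ x + 2 * δ),
      ((map_continuous f₂).add continuous_const).div
        (((map_continuous f₁).add (map_continuous f₂)).add continuous_const)
        (fun x => (hDpos x).ne')⟩ with hu₂def
    have hu₁_apply : ∀ x, u₁ x = (f₁ x + δ) / (f₁ x + f₂ x + 2 * δ) := fun x => rfl
    have hu₂_apply : ∀ x, u₂ x = (f₂ x + δ) / (f₁ x + f₂ x + 2 * δ) := fun x => rfl
    have hu₁0 : ∀ x, 0 ≤ u₁ x := fun x => div_nonneg (by linarith [h₁ x]) (hDpos x).le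
    have hu₂0 : ∀ x, 0 ≤ u₂ x := fun x => div_nonneg (by linarith [h₂ x]) (hDpos x).le
    have husum : u₁ + u₂ = 1 := by
      ext x
      simp only [ContinuousMap.add_apply, hu₁_apply, hu₂_apply, ContinuousMap.one_apply]
      rw [← add_div, div_eq_one_iff_eq (hDpos x).ne']
      ring
    -- error terms
    set e₁ : C(K, ℝ) := (f₁ + f₂) * u₁ - f₁ with he₁def
    set e₂ : C(K, ℝ) := (f₁ + f₂) * u₂ - f₂ with he₂def
    have herr : ∀ (f g : C(K, ℝ)) (u : C(K, ℝ)), (∀ x, 0 ≤ f x) → (∀ x, 0 ≤ g x) →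
        (∀ x, u x = (f x + δ) / (f x + g x + 2 * δ)) →
        ∀ x, |((f + g) * u - f) x| ≤ δ := by
      intro f g u hf hg hu x
      have hD : 0 < f x + g x + 2 * δ := by have := hf x; have := hg x; linarith
      have hval : ((f + g) * u - f) x = δ * (g x - f x) / (f x + g x + 2 * δ) := by
        simp only [ContinuousMap.sub_apply, ContinuousMap.mul_apply, ContinuousMap.add_apply,
          hu]
        rw [eq_div_iff hD.ne', sub_mul, mul_assoc, div_mul_cancel₀ _ hD.ne']
        ring
      rw [hval, abs_div, abs_of_pos hD, div_le_iff₀ hD, abs_mul, abs_of_pos hδ]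
      have habs : |g x - f x| ≤ f x + g x := by
        rw [abs_sub_le_iff]
        exact ⟨by linarith [hf x], by linarith [hg x]⟩
      nlinarith [hδ.le]
    have he₁ : ‖e₁‖ ≤ δ := (ContinuousMap.norm_le _ hδ.le).2 fun x => by
      rw [Real.norm_eq_abs]
      exact herr f₁ f₂ u₁ h₁ h₂ hu₁_apply x
    have he₂ : ‖e₂‖ ≤ δ := (ContinuousMap.norm_le _ hδ.le).2 fun x => by
      rw [Real.norm_eq_abs]
      have : ∀ x, |((f₂ + f₁) * u₂ - f₂) x| ≤ δ := herr f₂ f₁ u₂ h₂ h₁ (fun x => by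
        rw [hu₂_apply]; ring_nf)
      have heq : (f₁ + f₂) * u₂ - f₂ = (f₂ + f₁) * u₂ - f₂ := by ring
      rw [he₂def, heq]
      exact this x
    -- the test vector
    set s : Γ := M.smul (ofRealC 𝕜 u₁) t₁ + M.smul (ofRealC 𝕜 u₂) t₂ with hsdef
    have hsn : ‖s‖ ≤ 1 := by
      refine le_trans (convex_comb M hAM u₁ u₂ hu₁0 hu₂0 husum t₁ t₂) ?_
      exact max_le ht₁n ht₂n
    -- compute Φ s
    have hcompute : (M.dualSmul (ofRealC 𝕜 (f₁ + f₂)) ψ) s =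
        ((r₁ + r₂ : ℝ) : 𝕜) + (ψ (M.smul (ofRealC 𝕜 e₁) t₁) + ψ (M.smul (ofRealC 𝕜 e₂) t₂)) := by
      have happ : (M.dualSmul (ofRealC 𝕜 (f₁ + f₂)) ψ) s =
          ψ (M.smul (ofRealC 𝕜 (f₁ + f₂)) s) := rfl
      rw [happ, hsdef, map_add, map_add]
      have hc₁' : M.smul (ofRealC 𝕜 (f₁ + f₂)) (M.smul (ofRealC 𝕜 u₁) t₁) =
          M.smul (ofRealC 𝕜 f₁) t₁ + M.smul (ofRealC 𝕜 e₁) t₁ := by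
        rw [← smul_ofReal_mul,
          show (f₁ + f₂) * u₁ = f₁ + e₁ from by rw [he₁def]; ring, smul_ofReal_add]
      have hc₂' : M.smul (ofRealC 𝕜 (f₁ + f₂)) (M.smul (ofRealC 𝕜 u₂) t₂) =
          M.smul (ofRealC 𝕜 f₂) t₂ + M.smul (ofRealC 𝕜 e₂) t₂ := by
        rw [← smul_ofReal_mul,
          show (f₁ + f₂) * u₂ = f₂ + e₂ from by rw [he₂def]; ring, smul_ofReal_add]
      rw [hc₁', hc₂', map_add, map_add, hψ₁, hψ₂]
      push_cast
      ring
    have herr₁ : ‖ψ (M.smul (ofRealC 𝕜 e₁) t₁)‖ ≤ δ * ‖ψ‖ := by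
      calc ‖ψ (M.smul (ofRealC 𝕜 e₁) t₁)‖ ≤ ‖ψ‖ * ‖M.smul (ofRealC 𝕜 e₁) t₁‖ :=
            ContinuousLinearMap.le_opNorm _ _
        _ ≤ ‖ψ‖ * (‖e₁‖ * ‖t₁‖) := by gcongr; exact norm_smul_ofReal_le M _ _
        _ ≤ ‖ψ‖ * (δ * 1) :=
            mul_le_mul_of_nonneg_left (mul_le_mul he₁ ht₁n (norm_nonneg _) hδ.le)
              (norm_nonneg _)
        _ = δ * ‖ψ‖ := by ring
    have herr₂ : ‖ψ (M.smul (ofRealC 𝕜 e₂) t₂)‖ ≤ δ * ‖ψ‖ := by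
      calc ‖ψ (M.smul (ofRealC 𝕜 e₂) t₂)‖ ≤ ‖ψ‖ * ‖M.smul (ofRealC 𝕜 e₂) t₂‖ :=
            ContinuousLinearMap.le_opNorm _ _
        _ ≤ ‖ψ‖ * (‖e₂‖ * ‖t₂‖) := by gcongr; exact norm_smul_ofReal_le M _ _
        _ ≤ ‖ψ‖ * (δ * 1) :=
            mul_le_mul_of_nonneg_left (mul_le_mul he₂ ht₂n (norm_nonneg _) hδ.le)
              (norm_nonneg _)
        _ = δ * ‖ψ‖ := by ring
    have hr₁0 : 0 ≤ r₁ := norm_nonneg _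
    have hr₂0 : 0 ≤ r₂ := norm_nonneg _
    have hnorms : ‖((r₁ + r₂ : ℝ) : 𝕜)‖ = r₁ + r₂ := by
      rw [RCLike.norm_ofReal, abs_of_nonneg (by linarith)]
    have hlow : r₁ + r₂ - 2 * δ * ‖ψ‖ ≤ ‖(M.dualSmul (ofRealC 𝕜 (f₁ + f₂)) ψ) s‖ := by
      rw [hcompute]
      calc r₁ + r₂ - 2 * δ * ‖ψ‖
          ≤ ‖((r₁ + r₂ : ℝ) : 𝕜)‖ -
            ‖ψ (M.smul (ofRealC 𝕜 e₁) t₁) + ψ (M.smul (ofRealC 𝕜 e₂) t₂)‖ := by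
            rw [hnorms]
            have := norm_add_le (ψ (M.smul (ofRealC 𝕜 e₁) t₁)) (ψ (M.smul (ofRealC 𝕜 e₂) t₂))
            linarith
        _ ≤ _ := by
            have h := norm_sub_le (((r₁ + r₂ : ℝ) : 𝕜) +
              (ψ (M.smul (ofRealC 𝕜 e₁) t₁) + ψ (M.smul (ofRealC 𝕜 e₂) t₂)))
              (ψ (M.smul (ofRealC 𝕜 e₁) t₁) + ψ (M.smul (ofRealC 𝕜 e₂) t₂))
            rw [add_sub_cancel_right] at h
            linarith
    have hup : ‖(M.dualSmul (ofRealC 𝕜 (f₁ + f₂)) ψ) s‖ ≤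
        ‖M.dualSmul (ofRealC 𝕜 (f₁ + f₂)) ψ‖ := by
      calc ‖(M.dualSmul (ofRealC 𝕜 (f₁ + f₂)) ψ) s‖
          ≤ ‖M.dualSmul (ofRealC 𝕜 (f₁ + f₂)) ψ‖ * ‖s‖ := ContinuousLinearMap.le_opNorm _ _
        _ ≤ ‖M.dualSmul (ofRealC 𝕜 (f₁ + f₂)) ψ‖ * 1 :=
            mul_le_mul_of_nonneg_left hsn (norm_nonneg _)
        _ = _ := mul_one _
    linarith
end AMmain
section DualModule

variable (M : CKModule 𝕜 K Γ)

/-- The dual Banach module structure on `Γ' = Γ →L[𝕜] 𝕜`. -/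
def CKModule.dualMod : CKModule 𝕜 K (Γ →L[𝕜] 𝕜) where
  smul := ((ContinuousLinearMap.compL 𝕜 Γ Γ 𝕜).flip).comp M.smul
  one_smul ψ := by
    ext s
    simp only [ContinuousLinearMap.coe_comp', Function.comp_apply,
      ContinuousLinearMap.flip_apply, ContinuousLinearMap.compL_apply,
      ContinuousLinearMap.coe_comp']
    rw [M.one_smul]
  mul_smul f g ψ := by
    ext s
    simp only [ContinuousLinearMap.coe_comp', Function.comp_apply,
      ContinuousLinearMap.flip_apply, ContinuousLinearMap.compL_apply]
    rw [mul_comm f g, M.mul_smul]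
  norm_smul_le f ψ := by
    have h1 : ‖M.smul f‖ ≤ ‖f‖ :=
      ContinuousLinearMap.opNorm_le_bound _ (norm_nonneg f) (M.norm_smul_le f)
    calc ‖(((ContinuousLinearMap.compL 𝕜 Γ Γ 𝕜).flip).comp M.smul) f ψ‖
        = ‖ψ.comp (M.smul f)‖ := rfl
      _ ≤ ‖ψ‖ * ‖M.smul f‖ := ContinuousLinearMap.opNorm_comp_le _ _
      _ ≤ ‖ψ‖ * ‖f‖ := mul_le_mul_of_nonneg_left h1 (norm_nonneg ψ)
      _ = ‖f‖ * ‖ψ‖ := mul_comm _ _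

lemma dualMod_smul (f : C(K, 𝕜)) (ψ : Γ →L[𝕜] 𝕜) :
    M.dualMod.smul f ψ = M.dualSmul f ψ := rfl

lemma dualMod_isAM_iff : M.dualMod.IsAM ↔ M.DualIsAM := by
  constructor <;> intro h f₁ f₂ h₁ h₂ ψ <;>
    simpa only [dualMod_smul] using h f₁ f₂ h₁ h₂ ψ

lemma dualMod_isAL_iff : M.dualMod.IsAL ↔ M.DualIsAL := by
  constructor <;> intro h f₁ f₂ h₁ h₂ ψ <;>
    simpa only [dualMod_smul] using h f₁ f₂ h₁ h₂ ψ

lemma bidual_compat (f : C(K, 𝕜)) (s : Γ) :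
    NormedSpace.inclusionInDoubleDualLi 𝕜 (M.smul f s) =
      M.dualMod.dualMod.smul f (NormedSpace.inclusionInDoubleDualLi 𝕜 s) := by
  ext ψ
  rfl

lemma bidual_norm (t : Γ) : ‖NormedSpace.inclusionInDoubleDualLi 𝕜 t‖ = ‖t‖ :=
  (NormedSpace.inclusionInDoubleDualLi 𝕜).norm_map t

lemma transfer_am (h : M.dualMod.dualMod.IsAM) : M.IsAM := by
  intro f₁ f₂ h₁ h₂ s
  have key : ∀ F : C(K, 𝕜), ‖M.smul F s‖ =
      ‖M.dualMod.dualMod.smul F (NormedSpace.inclusionInDoubleDualLi 𝕜 s)‖ := fun F => by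
    rw [← bidual_compat, bidual_norm]
  rw [key, key, key]
  exact h f₁ f₂ h₁ h₂ _

lemma transfer_al (h : M.dualMod.dualMod.IsAL) : M.IsAL := by
  intro f₁ f₂ h₁ h₂ s
  have key : ∀ F : C(K, 𝕜), (NormedSpace.inclusionInDoubleDualLi 𝕜) (M.smul F s) =
      M.dualMod.dualMod.smul F (NormedSpace.inclusionInDoubleDualLi 𝕜 s) := fun F =>
    bidual_compat M F s
  have hsum : ‖M.smul (ofRealC 𝕜 f₁) s + M.smul (ofRealC 𝕜 f₂) s‖ =
      ‖M.dualMod.dualMod.smul (ofRealC 𝕜 f₁) (NormedSpace.inclusionInDoubleDualLi 𝕜 s) +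
        M.dualMod.dualMod.smul (ofRealC 𝕜 f₂) (NormedSpace.inclusionInDoubleDualLi 𝕜 s)‖ := by
    rw [← key, ← key, ← map_add, bidual_norm]
  rw [hsum]
  have k1 : ‖M.smul (ofRealC 𝕜 f₁) s‖ =
      ‖M.dualMod.dualMod.smul (ofRealC 𝕜 f₁) (NormedSpace.inclusionInDoubleDualLi 𝕜 s)‖ := by
    rw [← key, bidual_norm]
  have k2 : ‖M.smul (ofRealC 𝕜 f₂) s‖ =
      ‖M.dualMod.dualMod.smul (ofRealC 𝕜 f₂) (NormedSpace.inclusionInDoubleDualLi 𝕜 s)‖ := by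
    rw [← key, bidual_norm]
  rw [k1, k2]
  exact h f₁ f₂ h₁ h₂ _

end DualModule

section EmptyCase

variable (M : CKModule 𝕜 K Γ)

lemma empty_smul [IsEmpty K] (f : C(K, ℝ)) (s : Γ) : M.smul (ofRealC 𝕜 f) s = s := by
  have : ofRealC 𝕜 f = 1 := ContinuousMap.ext fun x => (IsEmpty.false x).elim
  rw [this, M.one_smul]

lemma empty_dualSmul [IsEmpty K] (f : C(K, ℝ)) (ψ : Γ →L[𝕜] 𝕜) :
    M.dualSmul (ofRealC 𝕜 f) ψ = ψ := by
  ext s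
  have h : (M.dualSmul (ofRealC 𝕜 f) ψ) s = ψ (M.smul (ofRealC 𝕜 f) s) := rfl
  rw [h, empty_smul]

lemma empty_isAM [IsEmpty K] : M.IsAM := by
  intro f₁ f₂ _ _ s
  rw [empty_smul, empty_smul, empty_smul, max_self]

lemma empty_isAL [IsEmpty K] : M.IsAL := by
  intro f₁ f₂ _ _ s
  rw [empty_smul, empty_smul, ← two_smul 𝕜 s, norm_smul]
  simp [two_mul]

lemma empty_dualIsAM [IsEmpty K] : M.DualIsAM := by
  intro f₁ f₂ _ _ ψ
  rw [empty_dualSmul, empty_dualSmul, empty_dualSmul, max_self]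

lemma empty_dualIsAL [IsEmpty K] : M.DualIsAL := by
  intro f₁ f₂ _ _ ψ
  rw [empty_dualSmul, empty_dualSmul, ← two_smul 𝕜 ψ, norm_smul]
  simp [two_mul]

end EmptyCase

/-- Duality of AM- and AL-modules: a unitary Banach module over `C(K)` is
an AM-module iff its dual is an AL-module, and an AL-module iff its dual is an AM-module. -/
theorem am_al_duality
    [T2Space K] [CompleteSpace Γ] (M : CKModule 𝕜 K Γ) :
    (M.IsAM ↔ M.DualIsAL) ∧ (M.IsAL ↔ M.DualIsAM) := by
  rcases isEmpty_or_nonempty K with hK | hK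
  · exact ⟨⟨fun _ => empty_dualIsAL M, fun _ => empty_isAM M⟩,
      ⟨fun _ => empty_dualIsAM M, fun _ => empty_isAL M⟩⟩
  · constructor
    · constructor
      · intro h
        exact am_to_dualAL M h
      · intro h
        have h1 : M.dualMod.IsAL := (dualMod_isAL_iff M).2 h
        have h2 : M.dualMod.DualIsAM := al_to_dualAM M.dualMod h1
        have h3 : M.dualMod.dualMod.IsAM := (dualMod_isAM_iff M.dualMod).2 h2
        exact transfer_am M h3
    · constructor
      · intro h
        exact al_to_dualAM M h
      · intro h
        have h1 : M.dualMod.IsAM := (dualMod_isAM_iff M).2 h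
        have h2 : M.dualMod.DualIsAL := am_to_dualAL M.dualMod h1
        have h3 : M.dualMod.dualMod.IsAL := (dualMod_isAL_iff M.dualMod).2 h2
        exact transfer_al M h3

end
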